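/- Let E_2 = (y_1 y_{12}, y_2 y_{12}) in k[y_1, y_2, y_{12}]. For every r ≥ 1, E_2^r = (y_{12})^r ∩ (y_1, y_2)^r; in particular the r-th symbolic power of E_2 equals E_2^r. -/

import Mathlib

open MvPolynomial

/-- Index type: nonempty subsets of `[q]`. -/
abbrev EIdx (q : ℕ) := {A : Finset (Fin q) // A.Nonempty}

/-- The generator `ε_i = ∏_{A ∋ i} y_A` of the extremal ideal. -/
noncomputable def extGen (k : Type*) [Field k] (q : ℕ) (i : Fin q) :
    MvPolynomial (EIdx q) k :=
  ∏ A : EIdx q, if i ∈ A.1 then X A else 1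

/-- The `q`-extremal ideal `E_q = (ε_1, …, ε_q)`. -/
noncomputable def extIdeal (k : Type*) [Field k] (q : ℕ) :
    Ideal (MvPolynomial (EIdx q) k) :=
  Ideal.span (Set.range (extGen k q))

/-- The `r`-th symbolic power of a square-free monomial ideal: the intersection
of the `r`-th powers of its minimal primes. -/
def symbPow {R : Type*} [CommRing R] (I : Ideal R) (r : ℕ) : Ideal R :=
  ⨅ P ∈ I.minimalPrimes, P ^ r

/-!
`E₂ = (y₁₂) · (y₁, y₂)` is a product of two incomparable primes, so these two primes are its
minimal primes. Writing `k[y₁, y₂, y₁₂] = k[y₁, y₂][y₁₂]`, the ideal `(y₁, y₂)ʳ` is extended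
from the coefficient ring, so `y₁₂` is a nonzerodivisor modulo it; hence
`(y₁₂)ʳ ∩ (y₁, y₂)ʳ = (y₁₂)ʳ (y₁, y₂)ʳ = E₂ʳ`.
-/

namespace Ideal

variable {R : Type*} [CommSemiring R]

theorem span_singleton_inf_eq_mul_of_mul_mem {a : R} {J : Ideal R}
    (h : ∀ g, a * g ∈ J → g ∈ J) : span {a} ⊓ J = span {a} * J := by
  refine le_antisymm (fun f ⟨hfa, hfJ⟩ ↦ ?_) mul_le_inf
  obtain ⟨g, rfl⟩ := mem_span_singleton'.1 hfa
  rw [mul_comm g a] at hfJ ⊢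
  exact mul_mem_mul (mem_span_singleton_self a) (h g hfJ)

theorem minimalPrimes_mul_of_not_le {P Q : Ideal R} [P.IsPrime] [Q.IsPrime]
    (hPQ : ¬P ≤ Q) (hQP : ¬Q ≤ P) : (P * Q).minimalPrimes = {P, Q} := by
  have hle : ∀ p : Ideal R, p.IsPrime → P * Q ≤ p → P ≤ p ∨ Q ≤ p :=
    fun p hp ↦ hp.mul_le.1
  ext p
  constructor
  · rintro ⟨⟨hp, hPQp⟩, hmin⟩
    rcases hle p hp hPQp with h | h
    · exact .inl (le_antisymm (hmin ⟨‹_›, mul_le_left⟩ h) h)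
    · exact .inr (le_antisymm (hmin ⟨‹_›, mul_le_right⟩ h) h)
  · rintro (rfl | rfl)
    · exact ⟨⟨‹_›, mul_le_left⟩, fun q ⟨hq, hPQq⟩ hqp ↦
        (hle q hq hPQq).resolve_right fun h ↦ hQP (h.trans hqp)⟩
    · exact ⟨⟨‹_›, mul_le_right⟩, fun q ⟨hq, hPQq⟩ hqp ↦
        (hle q hq hPQq).resolve_left fun h ↦ hPQ (h.trans hqp)⟩

end Ideal

namespace Polynomial

variable {R : Type*} [CommRing R]

theorem mem_map_C_of_X_pow_mul_mem {I : Ideal R} {f : R[X]} {n : ℕ}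
    (h : X ^ n * f ∈ I.map C) : f ∈ I.map C := by
  rw [Ideal.mem_map_C_iff] at h ⊢
  intro m
  simpa [mul_comm, coeff_mul_X_pow] using h (m + n)

theorem X_notMem_map_C {I : Ideal R} (hI : I ≠ ⊤) : (X : R[X]) ∉ I.map C := by
  rw [Ideal.mem_map_C_iff]
  intro h
  exact hI ((Ideal.eq_top_iff_one I).2 (by simpa using h 1))

end Polynomial

namespace MvPolynomial

variable {σ R : Type*} [CommSemiring R]

theorem idealOfVars_eq_ker_constantCoeff :
    idealOfVars σ R = RingHom.ker (constantCoeff : MvPolynomial σ R →+* R) := by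
  ext p
  rw [← pow_one (idealOfVars σ R), mem_pow_idealOfVars_iff', RingHom.mem_ker, constantCoeff_eq]
  refine ⟨fun h ↦ h 0 (by simp), fun h x hx ↦ ?_⟩
  rwa [(Finsupp.degree_eq_zero_iff x).1 (Nat.lt_one_iff.1 hx)]

theorem isPrime_idealOfVars [IsDomain R] : (idealOfVars σ R).IsPrime :=
  idealOfVars_eq_ker_constantCoeff (σ := σ) (R := R) ▸ RingHom.ker_isPrime _

theorem idealOfVars_ne_top [Nontrivial R] : idealOfVars σ R ≠ ⊤ := by
  rw [idealOfVars_eq_ker_constantCoeff]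
  exact RingHom.ker_ne_top _

end MvPolynomial

namespace ExtremalTwo

abbrev i₁ : EIdx 2 := ⟨{0}, Finset.singleton_nonempty 0⟩
abbrev i₂ : EIdx 2 := ⟨{1}, Finset.singleton_nonempty 1⟩
abbrev i₁₂ : EIdx 2 := ⟨Finset.univ, Finset.univ_nonempty⟩

def splitIdx : EIdx 2 ≃ Option (Fin 2) where
  toFun A := if 0 ∈ A.1 then (if 1 ∈ A.1 then none else some 0) else some 1
  invFun o := o.elim i₁₂ fun i ↦ ⟨{i}, Finset.singleton_nonempty i⟩
  left_inv := by decide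
  right_inv := by decide

variable (k : Type*) [Field k]

noncomputable def polyEquiv : MvPolynomial (EIdx 2) k ≃+* Polynomial (MvPolynomial (Fin 2) k) :=
  ((renameEquiv k splitIdx).trans (optionEquivLeft k (Fin 2))).toRingEquiv

theorem polyEquiv_X_i₁ : polyEquiv k (X i₁) = Polynomial.C (X 0) := by
  simp [polyEquiv, splitIdx, optionEquivLeft_X_some]

theorem polyEquiv_X_i₂ : polyEquiv k (X i₂) = Polynomial.C (X 1) := by
  simp [polyEquiv, splitIdx, optionEquivLeft_X_some]

theorem polyEquiv_X_i₁₂ : polyEquiv k (X i₁₂) = Polynomial.X := by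
  simp [polyEquiv, splitIdx, optionEquivLeft_X_none]

noncomputable abbrev idealY₁₂ : Ideal (MvPolynomial (EIdx 2) k) := Ideal.span {X i₁₂}

noncomputable abbrev idealY₁Y₂ : Ideal (MvPolynomial (EIdx 2) k) := Ideal.span {X i₁, X i₂}

theorem map_polyEquiv_idealY₁Y₂ :
    (idealY₁Y₂ k).map (polyEquiv k) = (idealOfVars (Fin 2) k).map Polynomial.C := by
  have : Set.range (X : Fin 2 → MvPolynomial (Fin 2) k) = {X 0, X 1} := by
    ext; simp [Fin.exists_fin_two, eq_comm]
  rw [Ideal.map_span, idealOfVars, this, Ideal.map_span, Set.image_pair, Set.image_pair,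
    polyEquiv_X_i₁, polyEquiv_X_i₂]

theorem isPrime_idealY₁₂ : (idealY₁₂ k).IsPrime :=
  (Ideal.span_singleton_prime (X_ne_zero _)).2 X_prime

theorem isPrime_idealY₁Y₂ : (idealY₁Y₂ k).IsPrime := by
  have := isPrime_idealOfVars (σ := Fin 2) (R := k)
  rw [← Ideal.comap_map_of_bijective _ (polyEquiv k).bijective (I := idealY₁Y₂ k),
    map_polyEquiv_idealY₁Y₂]
  exact Ideal.comap_isPrime _ _

theorem X_i₁_notMem_idealY₁₂ : X i₁ ∉ idealY₁₂ k := by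
  rw [Ideal.mem_span_singleton, X_dvd_X]
  decide

theorem X_i₁₂_notMem_idealY₁Y₂ : X i₁₂ ∉ idealY₁Y₂ k := by
  rw [← Ideal.apply_mem_of_equiv_iff (f := polyEquiv k), map_polyEquiv_idealY₁Y₂,
    polyEquiv_X_i₁₂]
  exact Polynomial.X_notMem_map_C idealOfVars_ne_top

theorem mem_idealY₁Y₂_pow_of_X_pow_mul_mem {r : ℕ} {g : MvPolynomial (EIdx 2) k}
    (h : X i₁₂ ^ r * g ∈ idealY₁Y₂ k ^ r) : g ∈ idealY₁Y₂ k ^ r := by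
  rw [← Ideal.apply_mem_of_equiv_iff (f := polyEquiv k), Ideal.map_pow,
    map_polyEquiv_idealY₁Y₂, ← Ideal.map_pow] at h ⊢
  rw [map_mul, map_pow, polyEquiv_X_i₁₂] at h
  exact Polynomial.mem_map_C_of_X_pow_mul_mem h

theorem univ_eIdx_two : (Finset.univ : Finset (EIdx 2)) = {i₁, i₂, i₁₂} := by decide

theorem extGen_two_zero : extGen k 2 0 = X i₁₂ * X i₁ := by
  simp [extGen, univ_eIdx_two, mul_comm]

theorem extGen_two_one : extGen k 2 1 = X i₁₂ * X i₂ := by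
  simp [extGen, univ_eIdx_two, mul_comm]

theorem extIdeal_two_eq_mul : extIdeal k 2 = idealY₁₂ k * idealY₁Y₂ k := by
  have : Set.range (extGen k 2) = {X i₁₂ * X i₁, X i₁₂ * X i₂} := by
    ext; simp [Fin.exists_fin_two, extGen_two_zero, extGen_two_one, eq_comm]
  rw [extIdeal, this, Ideal.span_mul_span', Set.singleton_mul, Set.image_pair]

theorem extIdeal_two_pow_eq_inf (r : ℕ) :
    extIdeal k 2 ^ r = idealY₁₂ k ^ r ⊓ idealY₁Y₂ k ^ r := by
  rw [extIdeal_two_eq_mul, mul_pow, Ideal.span_singleton_pow]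
  exact (Ideal.span_singleton_inf_eq_mul_of_mul_mem fun _ ↦
    mem_idealY₁Y₂_pow_of_X_pow_mul_mem k).symm

theorem minimalPrimes_extIdeal_two :
    (extIdeal k 2).minimalPrimes = {idealY₁₂ k, idealY₁Y₂ k} := by
  have := isPrime_idealY₁₂ k
  have := isPrime_idealY₁Y₂ k
  rw [extIdeal_two_eq_mul]
  exact Ideal.minimalPrimes_mul_of_not_le
    (fun h ↦ X_i₁₂_notMem_idealY₁Y₂ k (h (Ideal.mem_span_singleton_self _)))
    (fun h ↦ X_i₁_notMem_idealY₁₂ k (h (Ideal.subset_span (by simp))))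

end ExtremalTwo

theorem stmt12_general (k : Type*) [Field k] (r : ℕ) :
    (extIdeal k 2) ^ r =
      (Ideal.span {(X (⟨Finset.univ, Finset.univ_nonempty⟩ : EIdx 2) :
          MvPolynomial (EIdx 2) k)}) ^ r ⊓
      (Ideal.span {(X (⟨{0}, Finset.singleton_nonempty 0⟩ : EIdx 2) :
          MvPolynomial (EIdx 2) k),
        (X (⟨{1}, Finset.singleton_nonempty 1⟩ : EIdx 2) :
          MvPolynomial (EIdx 2) k)}) ^ r ∧
    symbPow (extIdeal k 2) r = (extIdeal k 2) ^ r := by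
  refine ⟨ExtremalTwo.extIdeal_two_pow_eq_inf k r, ?_⟩
  rw [symbPow, ExtremalTwo.minimalPrimes_extIdeal_two, iInf_pair,
    ExtremalTwo.extIdeal_two_pow_eq_inf]

theorem stmt12 (k : Type*) [Field k] (r : ℕ) (hr : 1 ≤ r) :
    (extIdeal k 2) ^ r =
      (Ideal.span {(X (⟨Finset.univ, Finset.univ_nonempty⟩ : EIdx 2) :
          MvPolynomial (EIdx 2) k)}) ^ r ⊓
      (Ideal.span {(X (⟨{0}, Finset.singleton_nonempty 0⟩ : EIdx 2) :
          MvPolynomial (EIdx 2) k),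
        (X (⟨{1}, Finset.singleton_nonempty 1⟩ : EIdx 2) :
          MvPolynomial (EIdx 2) k)}) ^ r ∧
    symbPow (extIdeal k 2) r = (extIdeal k 2) ^ r :=
  stmt12_general k r
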